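/- Fix γ₁, γ₂ ∈ [0,1]. Let ψ₂ = |w⟩⟨w| with |w⟩ = (|0101⟩ + |1010⟩)/√2 (qubit order: receiver 1's two rails, then receiver 2's two rails), and let ρ be the output of applying the amplitude damping channel A_{γ₁} independently to each of the first two qubits and A_{γ₂} independently to each of the last two qubits of ψ₂. Let P = |01⟩⟨01| + |10⟩⟨10| be the projection onto the one-particle sector of two qubits. Then (P ⊗ P) ρ (P ⊗ P) = (1-γ₁)(1-γ₂)·ψ₂, and in particular Tr[(P ⊗ P) ρ (P ⊗ P)] = (1-γ₁)(1-γ₂). That is, post-selection of both receivers on the one-particle sector succeeds with probability (1-γ₁)(1-γ₂) and produces an exact rank-2 maximally entangled state. -/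
import Mathlib


open Matrix Kronecker

/-- Kraus operators of the amplitude damping channel `A_γ`:
`K₁ = |0⟩⟨0| + √(1-γ)|1⟩⟨1|` and `K₂ = √γ·|0⟩⟨1|`. -/
noncomputable def adKraus (γ : ℝ) : Fin 2 → Matrix (Fin 2) (Fin 2) ℂ := fun i =>
  if i = 0 then !![1, 0; 0, ((Real.sqrt (1 - γ) : ℝ) : ℂ)]
  else !![0, ((Real.sqrt γ : ℝ) : ℂ); 0, 0]

/-- The computational basis vector `|ab⟩` on two qubits. -/
noncomputable def ket2 (a b : Fin 2) : Fin 2 × Fin 2 → ℂ :=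
  fun x => if x = (a, b) then 1 else 0

/-- The computational basis vector `|abcd⟩` on four qubits, grouped as
(receiver 1's two rails) × (receiver 2's two rails). -/
noncomputable def ket4 (a b c d : Fin 2) : (Fin 2 × Fin 2) × (Fin 2 × Fin 2) → ℂ :=
  fun x => if x = ((a, b), (c, d)) then 1 else 0

/-- The dual-rail state `|w⟩ = (|0101⟩ + |1010⟩)/√2`. -/
noncomputable def wVec : (Fin 2 × Fin 2) × (Fin 2 × Fin 2) → ℂ :=
  ((Real.sqrt 2 : ℂ))⁻¹ • (ket4 0 1 0 1 + ket4 1 0 1 0)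

/-- `ψ₂ = |w⟩⟨w|`. -/
noncomputable def psi2 :
    Matrix ((Fin 2 × Fin 2) × (Fin 2 × Fin 2)) ((Fin 2 × Fin 2) × (Fin 2 × Fin 2)) ℂ :=
  Matrix.vecMulVec wVec (star wVec)

/-- The projection `P = |01⟩⟨01| + |10⟩⟨10|` onto the one-particle sector of two qubits. -/
noncomputable def oneParticle : Matrix (Fin 2 × Fin 2) (Fin 2 × Fin 2) ℂ :=
  Matrix.vecMulVec (ket2 0 1) (star (ket2 0 1)) + Matrix.vecMulVec (ket2 1 0) (star (ket2 1 0))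

/- ------------------- auxiliary lemmas ------------------- -/

lemma dualRail.sandwich {n : Type*} [Fintype n] (M : Matrix n n ℂ) (u : n → ℂ) :
    M * Matrix.vecMulVec u (star u) * Mᴴ
      = Matrix.vecMulVec (M *ᵥ u) (star (M *ᵥ u)) := by
  ext i j
  simp only [Matrix.mul_apply, Matrix.vecMulVec_apply, Matrix.mulVec, dotProduct,
    Matrix.conjTranspose_apply, Pi.star_apply, Finset.sum_mul, Finset.mul_sum, map_sum,
    _root_.map_mul, RCLike.star_def]
  refine Finset.sum_congr rfl fun k _ => Finset.sum_congr rfl fun l _ => ?_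
  ring

lemma dualRail.vecMulVec_smul_smul {n : Type*} (d : ℂ) (w : n → ℂ) :
    Matrix.vecMulVec (d • w) (star (d • w)) = (d * star d) • Matrix.vecMulVec w (star w) := by
  ext i j
  simp [Matrix.vecMulVec_apply]
  ring

lemma dualRail.hermA : (oneParticle ⊗ₖ oneParticle)ᴴ = oneParticle ⊗ₖ oneParticle := by
  ext x y
  simp only [Matrix.conjTranspose_apply, Matrix.kroneckerMap_apply, oneParticle,
    Matrix.add_apply, Matrix.vecMulVec_apply, ket2, Pi.star_apply, RCLike.star_def,
    map_add, _root_.map_mul, apply_ite (starRingEnd ℂ), _root_.map_one, _root_.map_zero]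
  ring

lemma dualRail.ket4_factor (a b c d : Fin 2) :
    ket4 a b c d = fun x => ket2 a b x.1 * ket2 c d x.2 := by
  funext x
  by_cases h1 : x.1 = (a, b) <;> by_cases h2 : x.2 = (c, d) <;>
    simp [ket4, ket2, h1, h2, Prod.ext_iff]

lemma dualRail.kron_mulVec_prod {m n : Type*} [Fintype m] [Fintype n]
    (N₁ : Matrix m m ℂ) (N₂ : Matrix n n ℂ) (u : m → ℂ) (v : n → ℂ) :
    (N₁ ⊗ₖ N₂) *ᵥ (fun x => u x.1 * v x.2) = fun x => (N₁ *ᵥ u) x.1 * (N₂ *ᵥ v) x.2 := by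
  funext x
  simp only [Matrix.mulVec, dotProduct, Matrix.kroneckerMap_apply,
    Fintype.sum_prod_type, Finset.sum_mul_sum]
  refine Finset.sum_congr rfl fun y _ => Finset.sum_congr rfl fun z _ => ?_
  ring

lemma dualRail.col01 (γ : ℝ) (i j : Fin 2) :
    (oneParticle * (adKraus γ i ⊗ₖ adKraus γ j)) *ᵥ ket2 0 1
      = (if i = 0 ∧ j = 0 then ((Real.sqrt (1 - γ) : ℝ) : ℂ) else 0) • ket2 0 1 := by
  fin_cases i <;> fin_cases j <;>
    · funext ⟨a, b⟩
      fin_cases a <;> fin_cases b <;>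
        simp [oneParticle, adKraus, ket2, Matrix.mulVec, dotProduct,
          Matrix.mul_apply, Matrix.kroneckerMap_apply, Matrix.vecMulVec_apply,
          Fintype.sum_prod_type, Fin.sum_univ_two, Prod.ext_iff]

lemma dualRail.col10 (γ : ℝ) (i j : Fin 2) :
    (oneParticle * (adKraus γ i ⊗ₖ adKraus γ j)) *ᵥ ket2 1 0
      = (if i = 0 ∧ j = 0 then ((Real.sqrt (1 - γ) : ℝ) : ℂ) else 0) • ket2 1 0 := by
  fin_cases i <;> fin_cases j <;>
    · funext ⟨a, b⟩
      fin_cases a <;> fin_cases b <;>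
        simp [oneParticle, adKraus, ket2, Matrix.mulVec, dotProduct,
          Matrix.mul_apply, Matrix.kroneckerMap_apply, Matrix.vecMulVec_apply,
          Fintype.sum_prod_type, Fin.sum_univ_two, Prod.ext_iff]

lemma dualRail.key (γ₁ γ₂ : ℝ) (i₁ i₂ i₃ i₄ : Fin 2) :
    ((oneParticle ⊗ₖ oneParticle) *
        ((adKraus γ₁ i₁ ⊗ₖ adKraus γ₁ i₂) ⊗ₖ (adKraus γ₂ i₃ ⊗ₖ adKraus γ₂ i₄))) *ᵥ wVec
      = (if i₁ = 0 ∧ i₂ = 0 ∧ i₃ = 0 ∧ i₄ = 0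
          then ((Real.sqrt (1 - γ₁) * Real.sqrt (1 - γ₂) : ℝ) : ℂ) else 0) • wVec := by
  rw [← Matrix.mul_kronecker_mul]
  rw [wVec, dualRail.ket4_factor, dualRail.ket4_factor]
  rw [Matrix.mulVec_smul, Matrix.mulVec_add, dualRail.kron_mulVec_prod,
    dualRail.kron_mulVec_prod, dualRail.col01 γ₁ i₁ i₂, dualRail.col01 γ₂ i₃ i₄,
    dualRail.col10 γ₁ i₁ i₂, dualRail.col10 γ₂ i₃ i₄]
  funext x
  by_cases h1 : i₁ = 0 <;> by_cases h2 : i₂ = 0 <;> by_cases h3 : i₃ = 0 <;> by_cases h4 : i₄ = 0 <;>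
    simp [h1, h2, h3, h4, wVec, dualRail.ket4_factor, Pi.smul_apply, smul_eq_mul] <;> ring

lemma dualRail.trace_psi2 : psi2.trace = 1 := by
  have hhalf : (Real.sqrt 2)⁻¹ * (Real.sqrt 2)⁻¹ = 1 / 2 := by
    rw [← mul_inv, Real.mul_self_sqrt (by norm_num : (0:ℝ) ≤ 2)]; norm_num
  have htr : psi2.trace = ∑ x : (Fin 2 × Fin 2) × (Fin 2 × Fin 2), wVec x * star (wVec x) := by
    simp [psi2, Matrix.trace, Matrix.vecMulVec_apply]
  rw [htr, Fintype.sum_prod_type]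
  simp only [Fintype.sum_prod_type, Fin.sum_univ_two, wVec, ket4, Pi.smul_apply,
    Pi.add_apply, smul_eq_mul, Prod.mk.injEq]
  norm_num [RCLike.star_def, map_inv₀, Complex.conj_ofReal]
  rw [← Complex.ofReal_inv, ← Complex.ofReal_mul, hhalf]
  norm_num

/- ------------------- main theorem ------------------- -/

/-- Post-selecting both receivers of the damped dual-rail state on the one-particle sector
succeeds with probability `(1-γ₁)(1-γ₂)` and produces an exact rank-2 maximally entangled
state. -/
theorem dualRail_postselect (γ₁ γ₂ : ℝ)
    (hγ₁ : γ₁ ∈ Set.Icc (0 : ℝ) 1) (hγ₂ : γ₂ ∈ Set.Icc (0 : ℝ) 1)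
    (ρ : Matrix ((Fin 2 × Fin 2) × (Fin 2 × Fin 2)) ((Fin 2 × Fin 2) × (Fin 2 × Fin 2)) ℂ)
    (hρ : ρ = ∑ i₁ : Fin 2, ∑ i₂ : Fin 2, ∑ i₃ : Fin 2, ∑ i₄ : Fin 2,
        ((adKraus γ₁ i₁ ⊗ₖ adKraus γ₁ i₂) ⊗ₖ (adKraus γ₂ i₃ ⊗ₖ adKraus γ₂ i₄)) * psi2 *
          ((adKraus γ₁ i₁ ⊗ₖ adKraus γ₁ i₂) ⊗ₖ (adKraus γ₂ i₃ ⊗ₖ adKraus γ₂ i₄))ᴴ) :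
    (oneParticle ⊗ₖ oneParticle) * ρ * (oneParticle ⊗ₖ oneParticle)
        = (((1 - γ₁) * (1 - γ₂) : ℝ) : ℂ) • psi2 ∧
      ((oneParticle ⊗ₖ oneParticle) * ρ * (oneParticle ⊗ₖ oneParticle)).trace
        = (((1 - γ₁) * (1 - γ₂) : ℝ) : ℂ) := by
  have h1g : (0:ℝ) ≤ 1 - γ₁ := by linarith [hγ₁.2]
  have h2g : (0:ℝ) ≤ 1 - γ₂ := by linarith [hγ₂.2]
  have hs : (((Real.sqrt (1 - γ₁) * Real.sqrt (1 - γ₂) : ℝ) : ℂ)) *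
      star (((Real.sqrt (1 - γ₁) * Real.sqrt (1 - γ₂) : ℝ) : ℂ))
      = (((1 - γ₁) * (1 - γ₂) : ℝ) : ℂ) := by
    rw [RCLike.star_def, Complex.conj_ofReal, ← Complex.ofReal_mul]
    congr 1
    rw [show (Real.sqrt (1 - γ₁) * Real.sqrt (1 - γ₂)) * (Real.sqrt (1 - γ₁) * Real.sqrt (1 - γ₂))
        = (Real.sqrt (1 - γ₁) * Real.sqrt (1 - γ₁)) * (Real.sqrt (1 - γ₂) * Real.sqrt (1 - γ₂)) by
        ring,
      Real.mul_self_sqrt h1g, Real.mul_self_sqrt h2g]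
  set A := oneParticle ⊗ₖ oneParticle with hA
  have hterm : ∀ i₁ i₂ i₃ i₄ : Fin 2,
      A * (((adKraus γ₁ i₁ ⊗ₖ adKraus γ₁ i₂) ⊗ₖ (adKraus γ₂ i₃ ⊗ₖ adKraus γ₂ i₄)) * psi2 *
          ((adKraus γ₁ i₁ ⊗ₖ adKraus γ₁ i₂) ⊗ₖ (adKraus γ₂ i₃ ⊗ₖ adKraus γ₂ i₄))ᴴ) * A
        = (if i₁ = 0 ∧ i₂ = 0 ∧ i₃ = 0 ∧ i₄ = 0
            then (((1 - γ₁) * (1 - γ₂) : ℝ) : ℂ) else 0) • psi2 := by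
    intro i₁ i₂ i₃ i₄
    set B := (adKraus γ₁ i₁ ⊗ₖ adKraus γ₁ i₂) ⊗ₖ (adKraus γ₂ i₃ ⊗ₖ adKraus γ₂ i₄) with hB
    have h1 : A * (B * psi2 * Bᴴ) * A = (A * B) * psi2 * (A * B)ᴴ := by
      rw [Matrix.conjTranspose_mul, dualRail.hermA]
      noncomm_ring
    rw [h1, psi2, dualRail.sandwich, dualRail.key, dualRail.vecMulVec_smul_smul]
    by_cases h : i₁ = 0 ∧ i₂ = 0 ∧ i₃ = 0 ∧ i₄ = 0
    · rw [if_pos h, if_pos h, hs]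
    · rw [if_neg h, if_neg h]
      simp
  have hmain : A * ρ * A = (((1 - γ₁) * (1 - γ₂) : ℝ) : ℂ) • psi2 := by
    subst hρ
    simp only [Finset.mul_sum, Finset.sum_mul]
    simp only [hterm]
    simp [Fin.sum_univ_two]
  refine ⟨hmain, ?_⟩
  rw [hmain, Matrix.trace_smul, dualRail.trace_psi2, smul_eq_mul, mul_one]
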